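/- Let G = ({1,...,n}, E) be a connected undirected graph in which every node is its own neighbor, and let A be its lazy Metropolis matrix. If x(t+1) = A x(t) and E(t) = ||x(t) − x̄ 1||₂², then for every ε ∈ (0,1) and every integer t ≥ 37 n² · ln(1/ε), one has E(t) ≤ ε · E(0). -/

import Mathlib

/-!
A lazy doubly stochastic matrix is `A = (1 + B) / 2` with `B` doubly stochastic, so one step
lowers `‖y‖²` by at least half the Dirichlet form `∑ᵢⱼ Aᵢⱼ (yᵢ - yⱼ)²`. For the Metropolis
weights this form dominates `‖y‖² / (6 n²)` when `y` has mean zero: along a shortest path from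
`u` to `v`, Cauchy–Schwarz with weights `max (deg a) (deg b)` bounds `(y u - y v)²` by
`2 ∑ max (deg a) (deg b)` times the form, and the degrees along a shortest path sum to at most
`3 n`. Hence every step contracts the squared error by `1 - 1 / (12 n²)`, and
`(1 - c) ^ t ≤ exp (-c t)` gives the bound.
-/

open Finset Matrix SimpleGraph

section DoublyStochastic

variable {V : Type*} [Fintype V]

def dirichletForm (W : Matrix V V ℝ) (y : V → ℝ) : ℝ :=
  ∑ i, ∑ j, W i j * (y i - y j) ^ 2

lemma dirichletForm_congr {W W' : Matrix V V ℝ} (h : ∀ i j, i ≠ j → W i j = W' i j)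
    (y : V → ℝ) : dirichletForm W y = dirichletForm W' y := by
  refine sum_congr rfl fun i _ => sum_congr rfl fun j _ => ?_
  obtain rfl | hij := eq_or_ne i j
  · simp
  · rw [h i j hij]

variable [DecidableEq V]

lemma dirichletForm_eq_of_mem_doublyStochastic {A : Matrix V V ℝ}
    (hA : A ∈ doublyStochastic ℝ V) (y : V → ℝ) :
    dirichletForm A y = 2 * (∑ i, y i ^ 2 - y ⬝ᵥ (A *ᵥ y)) := by
  have hleft : ∑ i, ∑ j, A i j * y i ^ 2 = ∑ i, y i ^ 2 := by
    simp_rw [← sum_mul, sum_row_of_mem_doublyStochastic hA, one_mul]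
  have hright : ∑ i, ∑ j, A i j * y j ^ 2 = ∑ j, y j ^ 2 := by
    rw [sum_comm]; simp_rw [← sum_mul, sum_col_of_mem_doublyStochastic hA, one_mul]
  have hmid : ∑ i, ∑ j, A i j * (y i * y j) = y ⬝ᵥ (A *ᵥ y) := by
    simp_rw [dotProduct, mulVec, dotProduct, mul_sum]
    exact sum_congr rfl fun i _ => sum_congr rfl fun j _ => by ring
  calc dirichletForm A y
      = ∑ i, ∑ j, A i j * y i ^ 2 + ∑ i, ∑ j, A i j * y j ^ 2
          - 2 * ∑ i, ∑ j, A i j * (y i * y j) := by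
        simp_rw [dirichletForm, mul_sum, ← sum_add_distrib, ← sum_sub_distrib]
        exact sum_congr rfl fun i _ => sum_congr rfl fun j _ => by ring
    _ = _ := by rw [hleft, hright, hmid]; ring

lemma sum_mulVec_sq_le_of_mem_doublyStochastic {B : Matrix V V ℝ}
    (hB : B ∈ doublyStochastic ℝ V) (y : V → ℝ) :
    ∑ i, (B *ᵥ y) i ^ 2 ≤ ∑ i, y i ^ 2 := by
  have hjensen : ∀ i, (B *ᵥ y) i ^ 2 ≤ ∑ j, B i j * y j ^ 2 := fun i =>
    Real.pow_arith_mean_le_arith_mean_pow_of_even univ (B i) y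
      (fun j _ => nonneg_of_mem_doublyStochastic hB) (sum_row_of_mem_doublyStochastic hB i)
      even_two
  calc ∑ i, (B *ᵥ y) i ^ 2 ≤ ∑ i, ∑ j, B i j * y j ^ 2 := sum_le_sum fun i _ => hjensen i
    _ = ∑ j, y j ^ 2 := by
      rw [sum_comm]; simp_rw [← sum_mul, sum_col_of_mem_doublyStochastic hB, one_mul]

/-- With `A = (1 + B) / 2`, `y ⬝ᵥ A y - ‖A y‖² = (‖y‖² - ‖B y‖²) / 4 ≥ 0`. -/
lemma sum_mulVec_sq_le_sub_dirichletForm {A : Matrix V V ℝ}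
    (hA : A ∈ doublyStochastic ℝ V) (hdiag : ∀ i, 1 / 2 ≤ A i i) (y : V → ℝ) :
    ∑ i, (A *ᵥ y) i ^ 2 ≤ ∑ i, y i ^ 2 - dirichletForm A y / 2 := by
  set B : Matrix V V ℝ := (2 : ℝ) • A - 1
  have hB : B ∈ doublyStochastic ℝ V := by
    refine mem_doublyStochastic_iff_sum.2 ⟨fun i j => ?_, fun i => ?_, fun j => ?_⟩
    · obtain rfl | hij := eq_or_ne i j
      · simp only [Matrix.sub_apply, Matrix.smul_apply, smul_eq_mul, one_apply_eq, sub_nonneg, B]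
        linarith [hdiag i]
      · simp [B, hij, nonneg_of_mem_doublyStochastic hA]
    · simp only [Matrix.sub_apply, Matrix.smul_apply, smul_eq_mul, one_apply, sum_sub_distrib,
        ← mul_sum, sum_row_of_mem_doublyStochastic hA, sum_ite_eq, mem_univ, if_true, B]
      norm_num
    · simp only [Matrix.sub_apply, Matrix.smul_apply, smul_eq_mul, one_apply, sum_sub_distrib,
        ← mul_sum, sum_col_of_mem_doublyStochastic hA, sum_ite_eq', mem_univ, if_true, B]
      norm_num
  have hAy : ∀ i, (A *ᵥ y) i = (y i + (B *ᵥ y) i) / 2 := fun i => by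
    simp [B, sub_mulVec, smul_mulVec]
  have hgap : y ⬝ᵥ (A *ᵥ y) - ∑ i, (A *ᵥ y) i ^ 2 =
      (∑ i, y i ^ 2 - ∑ i, (B *ᵥ y) i ^ 2) / 4 := by
    simp only [dotProduct, hAy, ← sum_sub_distrib, sum_div]
    exact sum_congr rfl fun i _ => by ring
  rw [dirichletForm_eq_of_mem_doublyStochastic hA]
  linarith [sum_mulVec_sq_le_of_mem_doublyStochastic hB y]

end DoublyStochastic

lemma sum_sum_sub_sq_of_sum_eq_zero {ι : Type*} [Fintype ι] {y : ι → ℝ} (hy : ∑ i, y i = 0) :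
    ∑ i, ∑ j, (y i - y j) ^ 2 = 2 * Fintype.card ι * ∑ i, y i ^ 2 := by
  have hcross : ∑ i, ∑ j, y i * y j = 0 := by rw [← sum_mul_sum, hy, zero_mul]
  calc ∑ i, ∑ j, (y i - y j) ^ 2
      = ∑ i, ∑ _j : ι, y i ^ 2 + ∑ _i : ι, ∑ j, y j ^ 2 - 2 * ∑ i, ∑ j, y i * y j := by
        simp_rw [mul_sum, ← sum_add_distrib, ← sum_sub_distrib]
        exact sum_congr rfl fun i _ => sum_congr rfl fun j _ => by ring
    _ = 2 * Fintype.card ι * ∑ i, y i ^ 2 := by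
        rw [hcross]; simp only [sum_const, card_univ, nsmul_eq_mul, ← mul_sum]; ring

lemma Finset.card_le_of_forall_le_add {T : Finset ℕ} {k : ℕ}
    (h : ∀ s ∈ T, ∀ t ∈ T, t ≤ s + k) : #T ≤ k + 1 := by
  obtain rfl | hT := T.eq_empty_or_nonempty
  · simp
  calc #T ≤ #(Icc (T.min' hT) (T.min' hT + k)) :=
        card_le_card fun t ht => mem_Icc.2 ⟨T.min'_le t ht, h _ (T.min'_mem hT) t ht⟩
    _ = k + 1 := by rw [Nat.card_Icc]; omega

namespace SimpleGraph

variable {V : Type*} {G : SimpleGraph V}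

lemma Walk.dist_getVert_getVert {u v : V} {p : G.Walk u v} (hp : p.length = G.dist u v)
    {s t : ℕ} (hst : s ≤ t) (ht : t ≤ p.length) :
    G.dist (p.getVert s) (p.getVert t) = t - s := by
  have h := length_eq_dist_of_subwalk hp
    (((p.take t).isSubwalk_drop s).trans (p.isSubwalk_take t))
  rwa [Walk.drop_length, Walk.take_length, Walk.take_getVert, min_eq_left ht,
    min_eq_right hst, eq_comm] at h

variable [Fintype V] [DecidableRel G.Adj]

lemma dist_le_two_of_mem_insert_neighborFinset [DecidableEq V] {a b w : V}
    (ha : w ∈ insert a (G.neighborFinset a)) (hb : w ∈ insert b (G.neighborFinset b)) :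
    G.dist a b ≤ 2 := by
  have hwalk : ∀ c, w ∈ insert c (G.neighborFinset c) → ∃ q : G.Walk c w, q.length ≤ 1 := by
    intro c hc
    rcases mem_insert.1 hc with rfl | hc
    · exact ⟨.nil, by simp⟩
    · exact ⟨(mem_neighborFinset G c w).1 hc |>.toWalk, by simp⟩
  obtain ⟨qa, hqa⟩ := hwalk a ha
  obtain ⟨qb, hqb⟩ := hwalk b hb
  calc G.dist a b ≤ (qa.append qb.reverse).length := dist_le _
    _ ≤ 2 := by rw [Walk.length_append, Walk.length_reverse]; omega

/-- Two vertices of a geodesic whose closed neighbourhoods meet are at most two steps apart along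
it, so every vertex lies in at most three of these neighbourhoods. -/
lemma Walk.sum_degree_add_one_le [DecidableEq V] {u v : V} {p : G.Walk u v}
    (hp : p.length = G.dist u v) :
    ∑ t ∈ range (p.length + 1), (G.degree (p.getVert t) + 1) ≤ 3 * Fintype.card V := by
  set N : ℕ → Finset V := fun t => insert (p.getVert t) (G.neighborFinset (p.getVert t))
  have hcard : ∀ t, #(N t) = G.degree (p.getVert t) + 1 := fun t => by
    simp [N, card_insert_of_notMem]
  have hmult : ∀ w, #{t ∈ range (p.length + 1) | w ∈ N t} ≤ 3 := by
    intro w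
    refine card_le_of_forall_le_add fun s hs t ht => ?_
    simp only [mem_filter, mem_range] at hs ht
    rcases le_total s t with hst | hts
    · have := p.dist_getVert_getVert hp hst (by omega)
      have := dist_le_two_of_mem_insert_neighborFinset hs.2 ht.2
      omega
    · omega
  calc ∑ t ∈ range (p.length + 1), (G.degree (p.getVert t) + 1)
      = ∑ t ∈ range (p.length + 1), #(N t) := by simp_rw [hcard]
    _ = ∑ w, #{t ∈ range (p.length + 1) | w ∈ N t} := by
      simp_rw [card_filter]; rw [sum_comm]; simp [sum_ite_mem]
    _ ≤ ∑ _w : V, 3 := sum_le_sum fun w _ => hmult w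
    _ = 3 * Fintype.card V := by simp [mul_comm]

variable (G) in
noncomputable def metropolisWeights : Matrix V V ℝ := fun i j =>
  if G.Adj i j then 1 / (2 * (max (G.degree i) (G.degree j) : ℝ)) else 0

variable [DecidableEq V] (G) in
noncomputable def lazyMetropolis : Matrix V V ℝ := fun i j =>
  if j = i then 1 - ∑ l, G.metropolisWeights i l else G.metropolisWeights i j

lemma metropolisWeights_nonneg (i j : V) : 0 ≤ G.metropolisWeights i j := by
  unfold metropolisWeights; split_ifs <;> positivity

lemma metropolisWeights_comm (i j : V) : G.metropolisWeights i j = G.metropolisWeights j i := by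
  simp [metropolisWeights, G.adj_comm, max_comm]

lemma sum_metropolisWeights_le_half (i : V) : ∑ j, G.metropolisWeights i j ≤ 1 / 2 := by
  calc ∑ j, G.metropolisWeights i j
      ≤ ∑ j ∈ G.neighborFinset i, 1 / (2 * (G.degree i : ℝ)) := by
        rw [neighborFinset_eq_filter, sum_filter]
        refine sum_le_sum fun j _ => ?_
        unfold metropolisWeights
        split_ifs with hij
        · have : 0 < G.degree i := G.degree_pos_iff_exists_adj i |>.2 ⟨j, hij⟩
          gcongr
          exact le_max_left _ _
        · rfl
    _ ≤ 1 / 2 := by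
        rw [sum_const, card_neighborFinset_eq_degree, nsmul_eq_mul]
        obtain h | h := (G.degree i).eq_zero_or_pos
        · simp [h]
        · exact le_of_eq (by field_simp)

variable [DecidableEq V] (G)

lemma lazyMetropolis_self (i : V) : G.lazyMetropolis i i = 1 - ∑ l, G.metropolisWeights i l :=
  if_pos rfl

lemma lazyMetropolis_of_ne {i j : V} (h : i ≠ j) :
    G.lazyMetropolis i j = G.metropolisWeights i j :=
  if_neg h.symm

lemma isSymm_lazyMetropolis : G.lazyMetropolis.IsSymm := by
  ext i j
  obtain rfl | hij := eq_or_ne i j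
  · rfl
  · rw [Matrix.transpose_apply, lazyMetropolis_of_ne G hij, lazyMetropolis_of_ne G hij.symm,
      metropolisWeights_comm]

lemma half_le_lazyMetropolis_self (i : V) : 1 / 2 ≤ G.lazyMetropolis i i := by
  rw [lazyMetropolis_self]
  linarith [sum_metropolisWeights_le_half (G := G) i]

lemma lazyMetropolis_mem_doublyStochastic : G.lazyMetropolis ∈ doublyStochastic ℝ V := by
  have hrow : ∀ i, ∑ j, G.lazyMetropolis i j = 1 := fun i => by
    rw [← add_sum_erase _ _ (mem_univ i),
      sum_congr rfl fun j hj => lazyMetropolis_of_ne G (ne_of_mem_erase hj).symm,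
      sum_erase _ (by simp [metropolisWeights]), lazyMetropolis_self, sub_add_cancel]
  refine mem_doublyStochastic_iff_sum.2 ⟨fun i j => ?_, hrow, fun j => ?_⟩
  · obtain rfl | hij := eq_or_ne i j
    · linarith [G.half_le_lazyMetropolis_self i]
    · rw [lazyMetropolis_of_ne G hij]
      exact metropolisWeights_nonneg i j
  · simpa only [G.isSymm_lazyMetropolis.apply] using hrow j

lemma dirichletForm_lazyMetropolis (y : V → ℝ) :
    dirichletForm G.lazyMetropolis y = dirichletForm G.metropolisWeights y :=
  dirichletForm_congr (fun _ _ => lazyMetropolis_of_ne G) y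

variable {G}

lemma sq_sub_le_of_isPath {u v : V} {p : G.Walk u v} (hp : p.IsPath) (y : V → ℝ) :
    (y u - y v) ^ 2 ≤ 2 * (∑ t ∈ range p.length,
      (max (G.degree (p.getVert t)) (G.degree (p.getVert (t + 1))) : ℝ)) *
      dirichletForm G.metropolisWeights y := by
  set m : ℕ → ℝ := fun t => max (G.degree (p.getVert t)) (G.degree (p.getVert (t + 1)))
  set Δ : ℕ → ℝ := fun t => y (p.getVert t) - y (p.getVert (t + 1))
  have hadj : ∀ t ∈ range p.length, G.Adj (p.getVert t) (p.getVert (t + 1)) :=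
    fun t ht => p.adj_getVert_succ (mem_range.1 ht)
  have hm : ∀ t ∈ range p.length, 0 < m t := fun t ht =>
    lt_max_of_lt_left (Nat.cast_pos.2 (G.degree_pos_iff_exists_adj _ |>.2 ⟨_, hadj t ht⟩))
  have htelescope : ∑ t ∈ range p.length, Δ t = y u - y v :=
    (sum_range_sub' (fun t => y (p.getVert t)) _).trans (by simp)
  have hweight : ∀ t ∈ range p.length,
      Δ t ^ 2 / m t = 2 * (G.metropolisWeights (p.getVert t) (p.getVert (t + 1)) * Δ t ^ 2) := by
    intro t ht
    have := (hm t ht).ne'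
    change Δ t ^ 2 / m t = 2 * ((if _ then 1 / (2 * m t) else 0) * Δ t ^ 2)
    rw [if_pos (hadj t ht)]
    field_simp
  have hinj : Set.InjOn (fun t => (p.getVert t, p.getVert (t + 1))) (range p.length) :=
    fun s hs t ht hst => hp.getVert_injOn (by simp at hs ⊢; omega) (by simp at ht ⊢; omega)
      (Prod.ext_iff.1 hst).1
  have hpath : ∑ t ∈ range p.length,
      G.metropolisWeights (p.getVert t) (p.getVert (t + 1)) * Δ t ^ 2 ≤
      dirichletForm G.metropolisWeights y := by
    rw [dirichletForm, ← Fintype.sum_prod_type',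
      ← sum_image (f := fun q : V × V => G.metropolisWeights q.1 q.2 * (y q.1 - y q.2) ^ 2) hinj]
    exact sum_le_univ_sum_of_nonneg fun q =>
      mul_nonneg (metropolisWeights_nonneg _ _) (sq_nonneg _)
  calc (y u - y v) ^ 2 = (∑ t ∈ range p.length, Δ t) ^ 2 := by rw [htelescope]
    _ ≤ (∑ t ∈ range p.length, m t) * ∑ t ∈ range p.length, Δ t ^ 2 / m t :=
      sum_sq_le_sum_mul_sum_of_sq_le_mul _ (fun t ht => (hm t ht).le)
        (fun t ht => div_nonneg (sq_nonneg _) (hm t ht).le)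
        (fun t ht => by rw [mul_div_cancel₀ _ (hm t ht).ne'])
    _ = 2 * (∑ t ∈ range p.length, m t) * ∑ t ∈ range p.length,
          G.metropolisWeights (p.getVert t) (p.getVert (t + 1)) * Δ t ^ 2 := by
      rw [sum_congr rfl hweight, ← mul_sum]; ring
    _ ≤ _ := mul_le_mul_of_nonneg_left hpath
      (mul_nonneg zero_le_two (sum_nonneg fun t ht => (hm t ht).le))

lemma sq_sub_le_of_connected (hG : G.Connected) (y : V → ℝ) (u v : V) :
    (y u - y v) ^ 2 ≤ 12 * Fintype.card V * dirichletForm G.metropolisWeights y := by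
  obtain ⟨p, hp⟩ := hG.exists_walk_length_eq_dist u v
  set a : ℕ → ℕ := fun t => G.degree (p.getVert t)
  have hmax : ∑ t ∈ range p.length, max (a t) (a (t + 1)) ≤ 6 * Fintype.card V := by
    have hdeg : ∑ t ∈ range (p.length + 1), (a t + 1) ≤ 3 * Fintype.card V :=
      p.sum_degree_add_one_le hp
    have hfirst := sum_range_succ a p.length
    have hlast := sum_range_succ' a p.length
    have hle := sum_le_sum fun t (_ : t ∈ range p.length) => max_le_add_of_nonneg
      (Nat.zero_le (a t)) (Nat.zero_le (a (t + 1)))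
    rw [sum_add_distrib] at hle hdeg
    simp only [sum_const, card_range, smul_eq_mul, mul_one] at hdeg
    omega
  have hD : 0 ≤ dirichletForm G.metropolisWeights y := sum_nonneg fun i _ =>
    sum_nonneg fun j _ => mul_nonneg (metropolisWeights_nonneg i j) (sq_nonneg _)
  calc (y u - y v) ^ 2 ≤ 2 * (∑ t ∈ range p.length, (max (a t) (a (t + 1)) : ℝ)) *
        dirichletForm G.metropolisWeights y :=
        sq_sub_le_of_isPath (p.isPath_of_length_eq_dist hp) y
    _ ≤ 2 * (6 * Fintype.card V) * dirichletForm G.metropolisWeights y := by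
      gcongr
      exact_mod_cast hmax
    _ = 12 * Fintype.card V * dirichletForm G.metropolisWeights y := by ring

lemma sum_sq_le_dirichletForm_of_sum_eq_zero (hG : G.Connected) {y : V → ℝ}
    (hy : ∑ i, y i = 0) :
    ∑ i, y i ^ 2 ≤ 6 * Fintype.card V ^ 2 * dirichletForm G.metropolisWeights y := by
  have hn : (0 : ℝ) < Fintype.card V := by
    have := hG.nonempty; exact_mod_cast Fintype.card_pos
  have hpairs : ∑ i, ∑ j, (y i - y j) ^ 2 ≤
      ∑ _i : V, ∑ _j : V, 12 * Fintype.card V * dirichletForm G.metropolisWeights y :=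
    sum_le_sum fun i _ => sum_le_sum fun j _ => sq_sub_le_of_connected hG y i j
  rw [sum_sum_sub_sq_of_sum_eq_zero hy] at hpairs
  simp only [sum_const, card_univ, nsmul_eq_mul] at hpairs
  nlinarith

lemma sum_lazyMetropolis_mulVec_sq_le (hG : G.Connected) {y : V → ℝ} (hy : ∑ i, y i = 0) :
    ∑ i, (G.lazyMetropolis *ᵥ y) i ^ 2 ≤
      (1 - 1 / (12 * Fintype.card V ^ 2)) * ∑ i, y i ^ 2 := by
  have hn : (0 : ℝ) < Fintype.card V := by
    have := hG.nonempty; exact_mod_cast Fintype.card_pos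
  have hstep := sum_mulVec_sq_le_sub_dirichletForm G.lazyMetropolis_mem_doublyStochastic
    G.half_le_lazyMetropolis_self y
  have hpoincare := sum_sq_le_dirichletForm_of_sum_eq_zero hG hy
  rw [dirichletForm_lazyMetropolis] at hstep
  have : (∑ i, y i ^ 2) / (12 * Fintype.card V ^ 2) ≤
      dirichletForm G.metropolisWeights y / 2 := by
    rw [div_le_iff₀ (by positivity)]; linarith
  calc _ ≤ _ := hstep
    _ ≤ ∑ i, y i ^ 2 - (∑ i, y i ^ 2) / (12 * Fintype.card V ^ 2) := by linarith
    _ = _ := by ring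

lemma sum_sub_sq_succ_le (hG : G.Connected) {x : ℕ → V → ℝ}
    (hx : ∀ t, x (t + 1) = G.lazyMetropolis *ᵥ x t) {c : ℝ}
    (hc : ∑ i, x 0 i = Fintype.card V * c) (t : ℕ) :
    ∑ i, (x (t + 1) i - c) ^ 2 ≤ (1 - 1 / (12 * Fintype.card V ^ 2)) * ∑ i, (x t i - c) ^ 2 := by
  have hmean : ∑ i, x t i = Fintype.card V * c := by
    induction t with
    | zero => exact hc
    | succ t ih =>
      rw [hx, sum_mulVec_of_mem_doublyStochastic G.lazyMetropolis_mem_doublyStochastic, ih]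
  have hmulVec : G.lazyMetropolis *ᵥ (x t - c • 1) = x (t + 1) - c • 1 := by
    rw [hx, mulVec_sub, mulVec_smul,
      mulVec_one_of_mem_doublyStochastic G.lazyMetropolis_mem_doublyStochastic]
  have hy : ∑ i, (x t - c • 1) i = 0 := by simp [sum_sub_distrib, hmean]
  simpa [hmulVec] using sum_lazyMetropolis_mulVec_sq_le hG hy

end SimpleGraph

lemma le_mul_of_contraction {e : ℕ → ℝ} {K ε : ℝ} (hK : 1 ≤ K) (he : 0 ≤ e 0)
    (hstep : ∀ t, e (t + 1) ≤ (1 - 1 / K) * e t) (hε : 0 < ε) {t : ℕ}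
    (ht : K * Real.log (1 / ε) ≤ t) : e t ≤ ε * e 0 := by
  have hK1 : 1 / K ≤ 1 := (div_le_one (by linarith)).2 hK
  have hgeom : ∀ s, e s ≤ (1 - 1 / K) ^ s * e 0 := by
    intro s
    induction s with
    | zero => simp
    | succ s ih =>
      calc e (s + 1) ≤ (1 - 1 / K) * e s := hstep s
        _ ≤ (1 - 1 / K) * ((1 - 1 / K) ^ s * e 0) := by gcongr
        _ = (1 - 1 / K) ^ (s + 1) * e 0 := by ring
  have hpow : (1 - 1 / K) ^ t ≤ ε :=
    calc (1 - 1 / K) ^ t ≤ Real.exp (-(1 / K)) ^ t :=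
          pow_le_pow_left₀ (by linarith) (Real.one_sub_le_exp_neg _) t
      _ = Real.exp (-(t / K)) := by rw [← Real.exp_nat_mul]; ring_nf
      _ ≤ Real.exp (Real.log ε) := by
          have hlog : Real.log (1 / ε) ≤ t / K := by
            rwa [le_div_iff₀ (by linarith), mul_comm]
          rw [one_div, Real.log_inv] at hlog
          exact Real.exp_le_exp.2 (by linarith)
      _ = ε := Real.exp_log hε
  exact (hgeom t).trans (by gcongr)

open Classical in
theorem lazy_metropolis_convergence_time_general
    (n : ℕ) (hn : 0 < n)
    (E : Fin n → Fin n → Prop)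
    (hE_symm : ∀ i j, E i j → E j i)
    (hE_conn : ∀ i j, Relation.ReflTransGen E i j)
    (d : Fin n → ℕ)
    (hd : ∀ i, d i = (Finset.univ.filter fun j => j ≠ i ∧ E i j).card)
    (A : Matrix (Fin n) (Fin n) ℝ)
    (hA : ∀ i j, A i j =
      if j = i then
        1 - ∑ l ∈ Finset.univ.filter (fun l => l ≠ i ∧ E i l),
              1 / (2 * (max (d i) (d l) : ℝ))
      else if E i j then 1 / (2 * (max (d i) (d j) : ℝ)) else 0)
    (x : ℕ → Fin n → ℝ)
    (hx : ∀ t, x (t + 1) = A.mulVec (x t))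
    (xbar : ℝ) (hxbar : xbar = (∑ j, x 0 j) / n)
    (Esq : ℕ → ℝ) (hEsq : ∀ t, Esq t = ∑ i, (x t i - xbar) ^ 2) :
    ∀ ε : ℝ, 0 < ε → ε < 1 →
      ∀ t : ℕ, 37 * (n : ℝ) ^ 2 * Real.log (1 / ε) ≤ (t : ℝ) →
        Esq t ≤ ε * Esq 0 := by
  have : Nonempty (Fin n) := ⟨⟨0, hn⟩⟩
  let G := fromEdgeSet (Sym2.fromRel ⟨hE_symm⟩)
  have hadj : ∀ i j, G.Adj i j ↔ j ≠ i ∧ E i j := fun i j => by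
    simp [G, ne_comm, and_comm]
  have hG : G.Connected :=
    ⟨fun i j => reachable_fromEdgeSet_fromRel_eq_reflTransGen _ ▸ hE_conn i j⟩
  have hdeg : ∀ i, d i = G.degree i := fun i => by
    rw [hd, ← card_neighborFinset_eq_degree, neighborFinset_eq_filter]
    simp only [hadj]
  obtain rfl : A = G.lazyMetropolis := by
    ext i j
    rw [hA, lazyMetropolis]
    simp only [metropolisWeights, hadj, hdeg, sum_filter]
    split_ifs <;> simp_all
  have hmean : ∑ i, x 0 i = Fintype.card (Fin n) * xbar := by
    rw [hxbar, Fintype.card_fin]; field_simp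
  have hn1 : (1 : ℝ) ≤ n := by exact_mod_cast hn
  have hstep : ∀ t, Esq (t + 1) ≤ (1 - 1 / (37 * n ^ 2)) * Esq t := fun t => by
    rw [hEsq, hEsq]
    refine (sum_sub_sq_succ_le hG hx hmean t).trans ?_
    rw [Fintype.card_fin]
    gcongr (1 - 1 / ?_) * _
    nlinarith
  intro ε hε _ t ht
  exact le_mul_of_contraction (by nlinarith) (by rw [hEsq]; positivity) hstep hε ht

open Classical in
/-- With the lazy Metropolis weights, for every `ε ∈ (0,1)`, after
`t ≥ 37 n² ln(1/ε)` steps of the consensus iteration the squared error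
`E(t) = ‖x(t) - x̄ 1‖₂²` has shrunk by a factor of `ε`. -/
theorem lazy_metropolis_convergence_time
    (n : ℕ) (hn : 0 < n)
    (E : Fin n → Fin n → Prop)
    (hE_symm : ∀ i j, E i j → E j i)
    (hE_refl : ∀ i, E i i)
    (hE_conn : ∀ i j, Relation.ReflTransGen E i j)
    (d : Fin n → ℕ)
    (hd : ∀ i, d i = (Finset.univ.filter fun j => j ≠ i ∧ E i j).card)
    (A : Matrix (Fin n) (Fin n) ℝ)
    (hA : ∀ i j, A i j =
      if j = i then
        1 - ∑ l ∈ Finset.univ.filter (fun l => l ≠ i ∧ E i l),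
              1 / (2 * (max (d i) (d l) : ℝ))
      else if E i j then 1 / (2 * (max (d i) (d j) : ℝ)) else 0)
    (x : ℕ → Fin n → ℝ)
    (hx : ∀ t, x (t + 1) = A.mulVec (x t))
    (xbar : ℝ) (hxbar : xbar = (∑ j, x 0 j) / n)
    (Esq : ℕ → ℝ) (hEsq : ∀ t, Esq t = ∑ i, (x t i - xbar) ^ 2) :
    ∀ ε : ℝ, 0 < ε → ε < 1 →
      ∀ t : ℕ, 37 * (n : ℝ) ^ 2 * Real.log (1 / ε) ≤ (t : ℝ) →
        Esq t ≤ ε * Esq 0 :=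
  lazy_metropolis_convergence_time_general n hn E hE_symm hE_conn d hd A hA x hx xbar hxbar Esq hEsq
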